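/- arXiv:0908.1102 — 2 statements merged into one kernel-verified Lean document; each statement's English description precedes it below -/
import Mathlib

section
/- If γ is a path in the Rauzy diagram with involution from π to π', then B_γ · v_π = v_{π'}, where v_π = Σ_{π(x)<π(*)} e_{x̲} − Σ_{π(x)>π(*)} e_{x̲}; moreover (B_γ*)^{-1}·(v_π/⟨v_π,v_π⟩) − v_{π'}/⟨v_{π'},v_{π'}⟩ lies in S_{π'}. -/
open Finset

namespace Rauzy

/-- The alphabet with `2*d` letters. -/
abbrev Letter (d : ℕ) := Fin (2*d)
/-- Positions `1, …, 2d+1` (0-indexed). -/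
abbrev Pos (d : ℕ) := Fin (2*d+1)
/-- Combinatorial data: a bijection from `A ∪ {*}` (with `none = *`) to positions. -/
abbrev RPerm (d : ℕ) := Option (Letter d) ≃ Pos d

/-- A fixed-point-free involution of the alphabet. -/
structure Inv (d : ℕ) where
  i : Letter d → Letter d
  invol : ∀ a, i (i a) = a
  nofix : ∀ a, i a ≠ a

variable {d : ℕ}

/-- Admissibility: neither `i(A_l) ⊆ A_r` nor `i(A_r) ⊆ A_l`. -/
def Admissible (I : Inv d) (π : RPerm d) : Prop :=
  ¬ (∀ a : Letter d, π (some a) < π none → π none < π (some (I.i a))) ∧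
  ¬ (∀ a : Letter d, π none < π (some a) → π (some (I.i a)) < π none)

/-- A vector indexed by letters represents a vector indexed by involution classes
iff it is symmetric under the involution. -/
def Sym (I : Inv d) (v : Letter d → ℝ) : Prop := ∀ a, v (I.i a) = v a

/-- The balance condition defining the hyperplane `S_π`. -/
def Balanced (π : RPerm d) (v : Letter d → ℝ) : Prop :=
  ∑ a ∈ univ.filter (fun a => π (some a) < π none), v a
    = ∑ a ∈ univ.filter (fun a => π none < π (some a)), v a

def Positive (v : Letter d → ℝ) : Prop := ∀ a, 0 < v a

/-- Membership in `S_π` (as a vector in `ℝ^{A/i}`, in letter coordinates). -/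
def MemS (I : Inv d) (π : RPerm d) (v : Letter d → ℝ) : Prop := Sym I v ∧ Balanced π v

/-- The open cone `Θ_π` of admissible suspension data. -/
def MemTheta (I : Inv d) (π : RPerm d) (τ : Letter d → ℝ) : Prop :=
  MemS I π τ ∧
  (∀ k : Pos d, π none < k → (k : ℕ) < 2*d →
    0 < ∑ a ∈ univ.filter (fun a => π none < π (some a) ∧ π (some a) ≤ k), τ a) ∧
  (∀ k : Pos d, 0 < (k : ℕ) → k < π none →
    ∑ a ∈ univ.filter (fun a => k ≤ π (some a) ∧ π (some a) < π none), τ a < 0)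

/-- The cone `Θ'_π`: non-strict inequalities, excluding `0`. -/
def MemTheta' (I : Inv d) (π : RPerm d) (τ : Letter d → ℝ) : Prop :=
  MemS I π τ ∧ τ ≠ 0 ∧
  (∀ k : Pos d, π none < k → (k : ℕ) < 2*d →
    0 ≤ ∑ a ∈ univ.filter (fun a => π none < π (some a) ∧ π (some a) ≤ k), τ a) ∧
  (∀ k : Pos d, 0 < (k : ℕ) → k < π none →
    ∑ a ∈ univ.filter (fun a => k ≤ π (some a) ∧ π (some a) < π none), τ a ≤ 0)

/-- The linear operator `Ω(π)` applied to a vector: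
`(Ω(π)·v)_α = Σ_{π(ξ)>π(i(α))} v_ξ − Σ_{π(ξ)<π(α)} v_ξ`. -/
def omegaApply (I : Inv d) (π : RPerm d) (v : Letter d → ℝ) (a : Letter d) : ℝ :=
  (∑ x ∈ univ.filter (fun x => π (some (I.i a)) < π (some x)), v x)
  - ∑ x ∈ univ.filter (fun x => π (some x) < π (some a)), v x

/-- The left operation: the rightmost letter `β` is inserted immediately after `i(α)`,
where `α` is the leftmost letter; both permutations are admissible. -/
def LeftOpTo (I : Inv d) (π π' : RPerm d) : Prop :=
  Admissible I π ∧ Admissible I π' ∧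
  ∃ α β : Letter d, π (some α) = 0 ∧ π (some β) = Fin.last (2*d) ∧ β ≠ I.i α ∧
    (∀ x, π x ≤ π (some (I.i α)) → π' x = π x) ∧
    ((π' (some β) : ℕ) = (π (some (I.i α)) : ℕ) + 1) ∧
    (∀ x, x ≠ some β → π (some (I.i α)) < π x → (π' x : ℕ) = (π x : ℕ) + 1)

/-- The right operation: the leftmost letter `α` is inserted immediately before `i(β)`,
where `β` is the rightmost letter; both permutations are admissible. -/
def RightOpTo (I : Inv d) (π π' : RPerm d) : Prop :=
  Admissible I π ∧ Admissible I π' ∧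
  ∃ α β : Letter d, π (some α) = 0 ∧ π (some β) = Fin.last (2*d) ∧ α ≠ I.i β ∧
    (∀ x, π (some (I.i β)) ≤ π x → π' x = π x) ∧
    ((π' (some α) : ℕ) + 1 = (π (some (I.i β)) : ℕ)) ∧
    (∀ x, x ≠ some α → π x < π (some (I.i β)) → (π' x : ℕ) + 1 = (π x : ℕ))

/-- An arrow of the Rauzy diagram with involution, with its winner and loser. -/
structure Arrow (d : ℕ) (I : Inv d) where
  src : RPerm d
  dst : RPerm d
  winner : Letter d
  loser : Letter d
  ok : (LeftOpTo I src dst ∧ src (some winner) = 0 ∧ src (some loser) = Fin.last (2*d))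
     ∨ (RightOpTo I src dst ∧ src (some loser) = 0 ∧ src (some winner) = Fin.last (2*d))

/-- A list of arrows is a path if consecutive arrows match. -/
def IsPathList (I : Inv d) (l : List (Arrow d I)) : Prop :=
  l.Chain' (fun a b => a.dst = b.src)

/-- `B_γ` for an arrow `γ`: `B·e_ξ̲ = e_ξ̲` for `ξ̲ ≠ α̲` and `B·e_α̲ = e_α̲ + e_β̲`
(winner `α`, loser `β`), acting on vectors in letter coordinates. -/
def arrowB (I : Inv d) (a : Arrow d I) (v : Letter d → ℝ) : Letter d → ℝ :=
  fun x => v x + (if x = a.loser ∨ x = I.i a.loser then v a.winner else 0)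

/-- The transpose `B*_γ` for an arrow `γ`. -/
def arrowBt (I : Inv d) (a : Arrow d I) (v : Letter d → ℝ) : Letter d → ℝ :=
  fun x => v x + (if x = a.winner ∨ x = I.i a.winner then v a.loser else 0)

/-- The inverse transpose `(B*_γ)⁻¹` for an arrow `γ`. -/
def arrowBtInv (I : Inv d) (a : Arrow d I) (v : Letter d → ℝ) : Letter d → ℝ :=
  fun x => v x - (if x = a.winner ∨ x = I.i a.winner then v a.loser else 0)

/-- `B_γ = B_{γ_n} ⋯ B_{γ_1}` for a path `γ = γ_1 … γ_n`. -/
def pathB (I : Inv d) (l : List (Arrow d I)) (v : Letter d → ℝ) : Letter d → ℝ :=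
  l.foldl (fun w a => arrowB I a w) v

/-- `B*_γ = B*_{γ_1} ⋯ B*_{γ_n}`. -/
def pathBt (I : Inv d) (l : List (Arrow d I)) (v : Letter d → ℝ) : Letter d → ℝ :=
  l.foldr (fun a w => arrowBt I a w) v

/-- `(B*_γ)⁻¹ = (B*_{γ_n})⁻¹ ⋯ (B*_{γ_1})⁻¹`. -/
def pathBtInv (I : Inv d) (l : List (Arrow d I)) (v : Letter d → ℝ) : Letter d → ℝ :=
  l.foldl (fun w a => arrowBtInv I a w) v

/-- The canonical basis vector of `ℝ^{A/i}` for the class of `y`, in letter coordinates. -/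
def classBasis (I : Inv d) (y : Letter d) : Letter d → ℝ :=
  fun x => if x = y ∨ x = I.i y then 1 else 0

/-- A path is positive if all the entries of the matrix `B_γ` (over classes) are positive. -/
def PositivePath (I : Inv d) (l : List (Arrow d I)) : Prop :=
  ∀ x y : Letter d, 0 < pathB I l (classBasis I y) x

/-- A path is complete if every involution class is the winner of some arrow. -/
def CompletePath (I : Inv d) (l : List (Arrow d I)) : Prop :=
  ∀ x : Letter d, ∃ a ∈ l, a.winner = x ∨ a.winner = I.i x

/-- A `k`-complete path is a concatenation of `k` complete paths. -/
def KComplete (I : Inv d) (k : ℕ) (l : List (Arrow d I)) : Prop :=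
  ∃ ls : List (List (Arrow d I)), ls.length = k ∧ l = ls.flatten ∧ ∀ s ∈ ls, CompletePath I s

/-- Invariance of a set of permutations under the left and right operations. -/
def OpInvariant (I : Inv d) (R : Set (RPerm d)) : Prop :=
  ∀ π ∈ R, ∀ π', (LeftOpTo I π π' ∨ RightOpTo I π π') → π' ∈ R

/-- A Rauzy class with involution: a minimal nonempty invariant set of admissible
permutations in which every involution class wins some arrow. -/
def IsRauzyClass (I : Inv d) (R : Set (RPerm d)) : Prop :=
  R.Nonempty ∧ (∀ π ∈ R, Admissible I π) ∧ OpInvariant I R ∧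
  (∀ R' ⊆ R, R'.Nonempty → OpInvariant I R' → R' = R) ∧
  (∀ x : Letter d, ∃ a : Arrow d I, a.src ∈ R ∧ a.dst ∈ R ∧
    (a.winner = x ∨ a.winner = I.i x))

/-- A permutation is irreducible if it belongs to a Rauzy class with involution. -/
def Irreducible (I : Inv d) (π : RPerm d) : Prop :=
  ∃ R, IsRauzyClass I R ∧ π ∈ R

/-- The vector `v_π = Σ_{π(x)<π(*)} e_x̲ − Σ_{π(x)>π(*)} e_x̲`, in letter coordinates. -/
def vpi (I : Inv d) (π : RPerm d) (x : Letter d) : ℝ :=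
  (if π (some x) < π none then 1 else -1) + (if π (some (I.i x)) < π none then 1 else -1)


/-!
An arrow moves only its loser, from one end of the permutation to the slot next to `i(winner)`,
so to the same side of `*` as `i(winner)`; winner and loser sat at the two ends, on opposite
sides of `*`. Hence `v_{π'}` differs from `v_π` only on the loser's class, by `v_π(winner)`, which
is exactly `B_γ v_π`.

Since `(B*_γ)⁻¹` is the inverse adjoint of `B_γ`, `⟨v_{π'}, (B*_γ)⁻¹ u⟩ = ⟨B_γ v_π, (B*_γ)⁻¹ u⟩ =
⟨v_π, u⟩`. Taking `u = v_π / ⟨v_π, v_π⟩`, both terms of the difference pair to `1` with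
`v_{π'}`, and `⟨v_{π'}, w⟩ = 0` is the balance equation of `S_{π'}`.
-/

namespace Inv

variable (I : Inv d)

theorem involutive : Function.Involutive I.i := I.invol

end Inv

section ClassBasis

variable (I : Inv d)

theorem classBasis_inv (y x : Letter d) : classBasis I y (I.i x) = classBasis I y x := by
  simp only [classBasis, I.involutive.eq_iff, I.invol, or_comm]

theorem sum_classBasis_mul {v : Letter d → ℝ} (hv : Sym I v) (y : Letter d) :
    ∑ x, classBasis I y x * v x = 2 * v y := by
  rw [Fintype.sum_eq_add y (I.i y) (I.nofix y).symm fun x hx => by simp [classBasis, hx]]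
  simp only [classBasis, true_or, or_true, ite_true, one_mul, hv y]
  ring

theorem classBasis_mul_classBasis_of_ne {y z : Letter d} (h : z ≠ y) (h' : z ≠ I.i y)
    (x : Letter d) : classBasis I y x * classBasis I z x = 0 := by
  unfold classBasis
  split_ifs <;> grind [Inv.invol]

end ClassBasis

section Insertion

variable {ι : Type*} {n : ℕ} {p p' : ι → Fin n} {m : ι} {c : Fin n}

theorem val_insertAfter_cases (hle : ∀ x, p x ≤ c → p' x = p x)
    (hgt : ∀ x, x ≠ m → c < p x → (p' x : ℕ) = p x + 1) {x : ι} (hx : x ≠ m) :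
    ((p' x : ℕ) = p x ∧ p x ≤ c) ∨ ((p' x : ℕ) = p x + 1 ∧ c < p x) :=
  (le_or_gt (p x) c).imp (fun h => ⟨congrArg Fin.val (hle x h), h⟩) fun h => ⟨hgt x hx h, h⟩

theorem lt_iff_lt_of_insertAfter (hle : ∀ x, p x ≤ c → p' x = p x)
    (hgt : ∀ x, x ≠ m → c < p x → (p' x : ℕ) = p x + 1) {x y : ι} (hx : x ≠ m) (hy : y ≠ m) :
    p' x < p' y ↔ p x < p y := by
  rcases val_insertAfter_cases hle hgt hx with ⟨_, _⟩ | ⟨_, _⟩ <;>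
    rcases val_insertAfter_cases hle hgt hy with ⟨_, _⟩ | ⟨_, _⟩ <;> omega

theorem moved_lt_iff_of_insertAfter (hle : ∀ x, p x ≤ c → p' x = p x)
    (hm : (p' m : ℕ) = c + 1) (hgt : ∀ x, x ≠ m → c < p x → (p' x : ℕ) = p x + 1) {y : ι}
    (hy : y ≠ m) : p' m < p' y ↔ c < p y := by
  rcases val_insertAfter_cases hle hgt hy with ⟨_, _⟩ | ⟨_, _⟩ <;> omega

theorem val_insertBefore_cases (hge : ∀ x, c ≤ p x → p' x = p x)
    (hlt : ∀ x, x ≠ m → p x < c → (p' x : ℕ) + 1 = p x) {x : ι} (hx : x ≠ m) :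
    ((p' x : ℕ) = p x ∧ c ≤ p x) ∨ ((p' x : ℕ) + 1 = p x ∧ p x < c) :=
  (le_or_gt c (p x)).imp (fun h => ⟨congrArg Fin.val (hge x h), h⟩) fun h => ⟨hlt x hx h, h⟩

theorem lt_iff_lt_of_insertBefore (hge : ∀ x, c ≤ p x → p' x = p x)
    (hlt : ∀ x, x ≠ m → p x < c → (p' x : ℕ) + 1 = p x) {x y : ι} (hx : x ≠ m) (hy : y ≠ m) :
    p' x < p' y ↔ p x < p y := by
  rcases val_insertBefore_cases hge hlt hx with ⟨_, _⟩ | ⟨_, _⟩ <;>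
    rcases val_insertBefore_cases hge hlt hy with ⟨_, _⟩ | ⟨_, _⟩ <;> omega

theorem moved_lt_iff_of_insertBefore (hge : ∀ x, c ≤ p x → p' x = p x)
    (hm : (p' m : ℕ) + 1 = c) (hlt : ∀ x, x ≠ m → p x < c → (p' x : ℕ) + 1 = p x) {y : ι}
    (hy : y ≠ m) : p' m < p' y ↔ c ≤ p y := by
  rcases val_insertBefore_cases hge hlt hy with ⟨_, _⟩ | ⟨_, _⟩ <;> omega

end Insertion

def starSide (π : RPerm d) (x : Letter d) : ℝ := if π (some x) < π none then 1 else -1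

theorem starSide_of_eq_zero {π : RPerm d} {x : Letter d} (h : π (some x) = 0) :
    starSide π x = 1 :=
  if_pos (h ▸ Fin.pos_iff_ne_zero.2 (h ▸ π.injective.ne (Option.some_ne_none x).symm))

theorem starSide_of_eq_last {π : RPerm d} {x : Letter d} (h : π (some x) = Fin.last (2 * d)) :
    starSide π x = -1 :=
  if_neg (h ▸ not_lt.2 (Fin.le_last _))

section Vpi

variable (I : Inv d) (π : RPerm d)

theorem vpi_eq_starSide_add (x : Letter d) : vpi I π x = starSide π x + starSide π (I.i x) :=
  rfl

theorem vpi_inv (x : Letter d) : vpi I π (I.i x) = vpi I π x := by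
  rw [vpi_eq_starSide_add, vpi_eq_starSide_add, I.invol, add_comm]

theorem sym_vpi : Sym I (vpi I π) := vpi_inv I π

theorem sum_starSide_mul (v : Letter d → ℝ) :
    ∑ x, starSide π x * v x = ∑ a ∈ univ.filter (fun a => π (some a) < π none), v a
      - ∑ a ∈ univ.filter (fun a => π none < π (some a)), v a := by
  have hright : univ.filter (fun a => ¬ π (some a) < π none)
      = univ.filter (fun a => π none < π (some a)) :=
    Finset.filter_congr fun a _ =>
      not_lt.trans (π.injective.ne (Option.some_ne_none a).symm).le_iff_lt
  simp only [starSide, ite_mul, one_mul, neg_one_mul, Finset.sum_ite, Finset.sum_neg_distrib,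
    hright, sub_eq_add_neg]

theorem sum_vpi_mul {v : Letter d → ℝ} (hv : Sym I v) :
    ∑ x, vpi I π x * v x = 2 * (∑ a ∈ univ.filter (fun a => π (some a) < π none), v a
      - ∑ a ∈ univ.filter (fun a => π none < π (some a)), v a) := by
  have hswap : ∑ x, starSide π (I.i x) * v x = ∑ x, starSide π x * v x :=
    Fintype.sum_equiv I.involutive.toPerm _ _ fun x => by simp [hv x]
  simp only [vpi_eq_starSide_add, add_mul, Finset.sum_add_distrib, hswap, sum_starSide_mul]
  ring

theorem balanced_of_sum_vpi_mul_eq_zero {v : Letter d → ℝ} (hv : Sym I v)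
    (h : ∑ x, vpi I π x * v x = 0) : Balanced π v := by
  rw [sum_vpi_mul I π hv] at h
  exact sub_eq_zero.1 ((mul_eq_zero.1 h).resolve_left two_ne_zero)

end Vpi

theorem Admissible.sum_vpi_mul_self_pos {I : Inv d} {π : RPerm d} (h : Admissible I π) :
    0 < ∑ x, vpi I π x * vpi I π x := by
  obtain ⟨a, ha, hia⟩ : ∃ a, π (some a) < π none ∧ π (some (I.i a)) ≤ π none := by
    simpa using h.1
  have hia : π (some (I.i a)) < π none :=
    lt_of_le_of_ne hia (π.injective.ne (Option.some_ne_none _))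
  have hva : vpi I π a = 2 := by
    rw [vpi_eq_starSide_add, starSide, starSide, if_pos ha, if_pos hia]
    norm_num
  exact Finset.sum_pos' (fun x _ => mul_self_nonneg _) ⟨a, mem_univ a, by rw [hva]; norm_num⟩

namespace Arrow

variable {I : Inv d} (a : Arrow d I)

theorem starSide_winner_add_starSide_loser :
    starSide a.src a.winner + starSide a.src a.loser = 0 := by
  rcases a.ok with ⟨-, hw, hl⟩ | ⟨-, hl, hw⟩ <;>
    simp [starSide_of_eq_zero, starSide_of_eq_last, hw, hl]

theorem winner_ne_loser : a.winner ≠ a.loser := by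
  intro h
  have hsum := a.starSide_winner_add_starSide_loser
  rw [h, starSide] at hsum
  split_ifs at hsum <;> norm_num at hsum

theorem winner_ne_inv_loser : a.winner ≠ I.i a.loser := by
  rcases a.ok with ⟨⟨-, -, α, β, hα, hβ, hne, -⟩, hw, hl⟩ |
    ⟨⟨-, -, α, β, hα, hβ, hne, -⟩, hl, hw⟩
  · obtain rfl : a.winner = α := Option.some_injective _ (a.src.injective (hw.trans hα.symm))
    obtain rfl : a.loser = β := Option.some_injective _ (a.src.injective (hl.trans hβ.symm))
    exact Ne.symm (mt I.involutive.eq_iff.1 hne)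
  · obtain rfl : a.winner = β := Option.some_injective _ (a.src.injective (hw.trans hβ.symm))
    obtain rfl : a.loser = α := Option.some_injective _ (a.src.injective (hl.trans hα.symm))
    exact Ne.symm (mt I.involutive.eq_iff.1 hne)

theorem dst_lt_dst_none_iff {x : Letter d} (hx : x ≠ a.loser) :
    a.dst (some x) < a.dst none ↔ a.src (some x) < a.src none := by
  have hx' : some x ≠ some a.loser := Option.some_injective _ |>.ne hx
  have hnone : (none : Option (Letter d)) ≠ some a.loser := (Option.some_ne_none _).symm
  rcases a.ok with ⟨⟨-, -, α, β, -, hβ, -, hle, -, hgt⟩, -, hl⟩ |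
    ⟨⟨-, -, α, β, hα, -, -, hge, -, hlt⟩, hl, -⟩
  · obtain rfl : a.loser = β := Option.some_injective _ (a.src.injective (hl.trans hβ.symm))
    exact lt_iff_lt_of_insertAfter hle hgt hx' hnone
  · obtain rfl : a.loser = α := Option.some_injective _ (a.src.injective (hl.trans hα.symm))
    exact lt_iff_lt_of_insertBefore hge hlt hx' hnone

theorem dst_loser_lt_dst_none_iff :
    a.dst (some a.loser) < a.dst none ↔ a.src (some (I.i a.winner)) < a.src none := by
  have hnone : (none : Option (Letter d)) ≠ some a.loser := (Option.some_ne_none _).symm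
  rcases a.ok with ⟨⟨-, -, α, β, hα, hβ, -, hle, hm, hgt⟩, hw, hl⟩ |
    ⟨⟨-, -, α, β, hα, hβ, -, hge, hm, hlt⟩, hl, hw⟩
  · obtain rfl : a.winner = α := Option.some_injective _ (a.src.injective (hw.trans hα.symm))
    obtain rfl : a.loser = β := Option.some_injective _ (a.src.injective (hl.trans hβ.symm))
    exact moved_lt_iff_of_insertAfter hle hm hgt hnone
  · obtain rfl : a.winner = β := Option.some_injective _ (a.src.injective (hw.trans hβ.symm))
    obtain rfl : a.loser = α := Option.some_injective _ (a.src.injective (hl.trans hα.symm))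
    exact (moved_lt_iff_of_insertBefore hge hm hlt hnone).trans
      (a.src.injective.ne (Option.some_ne_none _)).le_iff_lt

theorem starSide_dst_of_ne_loser {x : Letter d} (hx : x ≠ a.loser) :
    starSide a.dst x = starSide a.src x := by
  simp only [starSide, a.dst_lt_dst_none_iff hx]

theorem starSide_dst_loser : starSide a.dst a.loser = starSide a.src (I.i a.winner) := by
  simp only [starSide, a.dst_loser_lt_dst_none_iff]

theorem vpi_dst_loser : vpi I a.dst a.loser = vpi I a.src a.loser + vpi I a.src a.winner := by
  simp only [vpi_eq_starSide_add, a.starSide_dst_loser,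
    a.starSide_dst_of_ne_loser (I.nofix a.loser)]
  linarith [a.starSide_winner_add_starSide_loser]

theorem vpi_dst_of_ne {x : Letter d} (hx : x ≠ a.loser) (hx' : x ≠ I.i a.loser) :
    vpi I a.dst x = vpi I a.src x := by
  rw [vpi_eq_starSide_add, vpi_eq_starSide_add, a.starSide_dst_of_ne_loser hx,
    a.starSide_dst_of_ne_loser (mt I.involutive.eq_iff.1 hx')]

theorem admissible_src : Admissible I a.src := by
  rcases a.ok with ⟨⟨h, -⟩, -⟩ | ⟨⟨h, -⟩, -⟩ <;> exact h

theorem admissible_dst : Admissible I a.dst := by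
  rcases a.ok with ⟨⟨-, h, -⟩, -⟩ | ⟨⟨-, h, -⟩, -⟩ <;> exact h

end Arrow

theorem arrowB_vpi_src {I : Inv d} (a : Arrow d I) : arrowB I a (vpi I a.src) = vpi I a.dst := by
  funext x
  by_cases hx : x = a.loser
  · subst hx
    rw [arrowB, if_pos (Or.inl rfl), a.vpi_dst_loser]
  by_cases hx' : x = I.i a.loser
  · subst hx'
    rw [arrowB, if_pos (Or.inr rfl), vpi_inv, vpi_inv, a.vpi_dst_loser]
  rw [arrowB, if_neg (by tauto), add_zero, a.vpi_dst_of_ne hx hx']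

section Adjoint

variable {I : Inv d}

theorem arrowB_apply (a : Arrow d I) (v : Letter d → ℝ) (x : Letter d) :
    arrowB I a v x = v x + v a.winner * classBasis I a.loser x := by
  simp only [arrowB, classBasis, mul_ite, mul_one, mul_zero]

theorem arrowBtInv_apply (a : Arrow d I) (u : Letter d → ℝ) (x : Letter d) :
    arrowBtInv I a u x = u x - u a.loser * classBasis I a.winner x := by
  simp only [arrowBtInv, classBasis, mul_ite, mul_one, mul_zero]

theorem sym_arrowB (a : Arrow d I) {v : Letter d → ℝ} (hv : Sym I v) : Sym I (arrowB I a v) :=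
  fun x => by rw [arrowB_apply, arrowB_apply, hv, classBasis_inv]

theorem sym_arrowBtInv (a : Arrow d I) {u : Letter d → ℝ} (hu : Sym I u) :
    Sym I (arrowBtInv I a u) :=
  fun x => by rw [arrowBtInv_apply, arrowBtInv_apply, hu, classBasis_inv]

theorem sum_arrowB_mul_arrowBtInv (a : Arrow d I) {u v : Letter d → ℝ} (hu : Sym I u)
    (hv : Sym I v) : ∑ x, arrowB I a v x * arrowBtInv I a u x = ∑ x, v x * u x := by
  have hdisj : ∑ x, classBasis I a.loser x * classBasis I a.winner x = 0 :=
    Finset.sum_eq_zero fun x _ =>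
      classBasis_mul_classBasis_of_ne I a.winner_ne_loser a.winner_ne_inv_loser x
  have hexpand : ∑ x, arrowB I a v x * arrowBtInv I a u x
      = ∑ x, v x * u x - u a.loser * ∑ x, classBasis I a.winner x * v x
        + v a.winner * ∑ x, classBasis I a.loser x * u x
        - v a.winner * u a.loser * ∑ x, classBasis I a.loser x * classBasis I a.winner x := by
    simp only [arrowB_apply, arrowBtInv_apply, Finset.mul_sum, ← Finset.sum_sub_distrib,
      ← Finset.sum_add_distrib]
    exact Finset.sum_congr rfl fun x _ => by ring
  rw [hexpand, sum_classBasis_mul I hv, sum_classBasis_mul I hu, hdisj]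
  ring

theorem sym_pathBtInv (l : List (Arrow d I)) {u : Letter d → ℝ} (hu : Sym I u) :
    Sym I (pathBtInv I l u) := by
  induction l generalizing u with
  | nil => exact hu
  | cons a l ih => exact ih (sym_arrowBtInv a hu)

theorem sum_pathB_mul_pathBtInv (l : List (Arrow d I)) {u v : Letter d → ℝ} (hu : Sym I u)
    (hv : Sym I v) : ∑ x, pathB I l v x * pathBtInv I l u x = ∑ x, v x * u x := by
  induction l generalizing u v with
  | nil => rfl
  | cons a l ih =>
    exact (ih (sym_arrowBtInv a hu) (sym_arrowB a hv)).trans (sum_arrowB_mul_arrowBtInv a hu hv)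

end Adjoint

theorem pathB_vpi_src {I : Inv d} (a : Arrow d I) (l : List (Arrow d I))
    (hl : IsPathList I (a :: l)) :
    pathB I (a :: l) (vpi I a.src) = vpi I ((a :: l).getLast (List.cons_ne_nil a l)).dst := by
  induction l generalizing a with
  | nil => exact arrowB_vpi_src a
  | cons b l ih =>
    obtain ⟨hab, hl⟩ := List.isChain_cons_cons.1 hl
    have hB : pathB I (a :: b :: l) (vpi I a.src) = pathB I (b :: l) (vpi I b.src) := by
      rw [← hab, ← arrowB_vpi_src a]
      rfl
    rw [hB, ih b hl]
    rfl

theorem sum_mul_div_half_sum_mul_self {ι : Type*} [Fintype ι] {v : ι → ℝ}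
    (hv : ∑ z, v z * v z ≠ 0) : ∑ x, v x * (v x / ((∑ z, v z * v z) / 2)) = 2 := by
  simp only [← mul_div_assoc, ← Finset.sum_div]
  generalize ∑ z, v z * v z = S at hv ⊢
  field_simp

/-- Each class has two letters, so `⟨u,v⟩ = (Σ_x u x * v x)/2` in letter coordinates. -/
theorem pathB_vpi_and_difference_in_S
    {d : ℕ} (I : Inv d) (l : List (Arrow d I)) (hne : l ≠ [])
    (hpath : IsPathList I l) (π π' : RPerm d)
    (hs : (l.head hne).src = π) (he : (l.getLast hne).dst = π') :
    pathB I l (vpi I π) = vpi I π' ∧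
      MemS I π' (fun x =>
        pathBtInv I l (fun y => vpi I π y / ((∑ z, vpi I π z * vpi I π z) / 2)) x
          - vpi I π' x / ((∑ z, vpi I π' z * vpi I π' z) / 2)) := by
  have hB : pathB I l (vpi I π) = vpi I π' := by
    obtain ⟨a, t, rfl⟩ := List.exists_cons_of_ne_nil hne
    subst hs he
    exact pathB_vpi_src a t hpath
  have hN : ∑ z, vpi I π z * vpi I π z ≠ 0 :=
    (hs ▸ (l.head hne).admissible_src).sum_vpi_mul_self_pos.ne'
  have hN' : ∑ z, vpi I π' z * vpi I π' z ≠ 0 :=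
    (he ▸ (l.getLast hne).admissible_dst).sum_vpi_mul_self_pos.ne'
  set u := fun y => vpi I π y / ((∑ z, vpi I π z * vpi I π z) / 2) with hu_def
  have hu : Sym I u := fun y => by simp only [hu_def, vpi_inv]
  have hsym : Sym I (fun x =>
      pathBtInv I l u x - vpi I π' x / ((∑ z, vpi I π' z * vpi I π' z) / 2)) :=
    fun x => by simp only [sym_pathBtInv l hu x, vpi_inv]
  have hdot : ∑ x, vpi I π' x * pathBtInv I l u x = 2 := by
    rw [← hB, sum_pathB_mul_pathBtInv l hu (sym_vpi I π)]
    exact sum_mul_div_half_sum_mul_self hN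
  refine ⟨hB, hsym, balanced_of_sum_vpi_mul_eq_zero I π' hsym ?_⟩
  simp only [mul_sub, Finset.sum_sub_distrib]
  rw [hdot, sum_mul_div_half_sum_mul_self hN', sub_self]

end Rauzy
end

section
/- Consider the Hilbert projective metric on an open convex cone C ⊂ ℝ^d containing no full line in its closure. If C' ⊆ C is an open subcone whose diameter with respect to dist_C is at most M < ∞, then there exists δ = δ(M) < 1 such that for all x, y ∈ C', dist_C(x,y) ≤ δ · dist_{C'}(x,y): the inclusion C' ↪ C is a uniform contraction of the respective Hilbert metrics. -/
/-- `C` is a cone: stable under multiplication by positive scalars. -/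
def IsCone {n : ℕ} (C : Set (Fin n → ℝ)) : Prop :=
  ∀ x ∈ C, ∀ t : ℝ, 0 < t → t • x ∈ C

/-- `M_C(x,y) = inf {t > 0 : t•x − y ∈ C̄}`, the gauge entering the Hilbert metric. -/
noncomputable def gaugeM {n : ℕ} (C : Set (Fin n → ℝ)) (x y : Fin n → ℝ) : ℝ :=
  sInf {t : ℝ | 0 < t ∧ t • x - y ∈ closure C}

/-- The Hilbert projective pseudo-metric of the open convex cone `C`:
`dist_C(x,y) = log (M_C(x,y) · M_C(y,x))`. -/
noncomputable def coneDist {n : ℕ} (C : Set (Fin n → ℝ)) (x y : Fin n → ℝ) : ℝ :=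
  Real.log (gaugeM C x y * gaugeM C y x)

/-!
Birkhoff's argument. For `x, y ∈ C'` pick `b > M_{C'}(x,y)` and `a⁻¹ > M_{C'}(y,x)`; then
`p = y - a x` and `q = b x - y` lie in the open cone `C'`, so `dist_C(p,q) ≤ Δ`, the diameter
of `C'`. Expressing `x, y` through `p, q` bounds `M_C(x,y) M_C(y,x)` by the cross ratio
`(m s + 1)(m' + 1) / ((m + 1)(m' + s))`, where `s = b/a`, `m = M_C(q,p)`, `m' = M_C(p,q)` and
`m m' ≤ e^Δ`. A one-variable monotonicity argument bounds its logarithm by `tanh(Δ/4) log s`,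
and `s` can be taken arbitrarily close to `M_{C'}(x,y) M_{C'}(y,x)`.
-/

open Set Topology

variable {n : ℕ} {C : Set (Fin n → ℝ)}

def IsSalientClosure (C : Set (Fin n → ℝ)) : Prop :=
  ∀ x : Fin n → ℝ, x ≠ 0 → x ∈ closure C → -x ∈ closure C → False

lemma IsSalientClosure.subset {C' : Set (Fin n → ℝ)} (hsal : IsSalientClosure C) (hsub : C' ⊆ C) :
    IsSalientClosure C' := fun z hz h h' =>
  hsal z hz (closure_mono hsub h) (closure_mono hsub h')

lemma exists_pos_mem_of_isOpen {X : Type*} [TopologicalSpace X] {U : Set X} (hU : IsOpen U)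
    {f : ℝ → X} (hf : ContinuousAt f 0) (h0 : f 0 ∈ U) : ∃ t > 0, f t ∈ U :=
  (((hf.eventually_mem (hU.mem_nhds h0)).filter_mono nhdsWithin_le_nhds).and
    (self_mem_nhdsWithin : Ioi (0 : ℝ) ∈ 𝓝[>] 0)).exists.imp fun _ h => ⟨h.2, h.1⟩

namespace IsCone

lemma smul_mem_closure (hC : IsCone C) {z : Fin n → ℝ} (hz : z ∈ closure C) {t : ℝ}
    (ht : 0 < t) : t • z ∈ closure C :=
  map_mem_closure (continuous_const_smul t) hz fun w hw => hC w hw t ht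

lemma add_mem_of_mem_closure (hC : IsCone C) (hO : IsOpen C) (hconv : Convex ℝ C)
    {z w : Fin n → ℝ} (hz : z ∈ closure C) (hw : w ∈ C) : z + w ∈ C := by
  have hmid := hconv.combo_closure_interior_mem_interior hz (hO.interior_eq.symm ▸ hw)
    (by norm_num : (0 : ℝ) ≤ 1 / 2) (by norm_num : (0 : ℝ) < 1 / 2) (by norm_num)
  rw [hO.interior_eq] at hmid
  convert hC _ hmid 2 two_pos using 1
  module

lemma exists_smul_sub_mem (hC : IsCone C) (hO : IsOpen C) {x : Fin n → ℝ} (hx : x ∈ C)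
    (y : Fin n → ℝ) : ∃ t : ℝ, 0 < t ∧ t • x - y ∈ C := by
  obtain ⟨s, hs, hmem⟩ :=
    exists_pos_mem_of_isOpen hO (f := fun s : ℝ => x - s • y) (by fun_prop)
      (by simpa using hx)
  refine ⟨s⁻¹, inv_pos.2 hs, ?_⟩
  simpa [smul_sub, smul_smul, inv_mul_cancel₀ hs.ne'] using hC _ hmem s⁻¹ (inv_pos.2 hs)

lemma eq_zero_of_zero_mem (hC : IsCone C) (hO : IsOpen C) (hsal : IsSalientClosure C)
    (h0 : (0 : Fin n → ℝ) ∈ C) (z : Fin n → ℝ) : z = 0 := by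
  have hmem : ∀ w, w ∈ C := fun w => by
    obtain ⟨t, ht, htw⟩ :=
      exists_pos_mem_of_isOpen hO (f := fun t : ℝ => t • w) (by fun_prop) (by simpa using h0)
    simpa [smul_smul, inv_mul_cancel₀ ht.ne'] using hC _ htw t⁻¹ (inv_pos.2 ht)
  by_contra hz
  exact hsal z hz (subset_closure (hmem z)) (subset_closure (hmem (-z)))

lemma lt_of_sub_mem_of_sub_mem (hC : IsCone C) (hO : IsOpen C) (hconv : Convex ℝ C)
    (hsal : IsSalientClosure C) (h0 : (0 : Fin n → ℝ) ∉ C) {x y : Fin n → ℝ} (hx : x ∈ C)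
    {a b : ℝ} (hp : y - a • x ∈ C) (hq : b • x - y ∈ C) : a < b := by
  have hsum : (b - a) • x ∈ C := by
    convert hC.add_mem_of_mem_closure hO hconv (subset_closure hp) hq using 1
    module
  by_contra! hba
  rcases hba.eq_or_lt with hab | hab
  · exact h0 (by simpa [hab] using hsum)
  · refine hsal ((a - b) • x)
      (smul_ne_zero (sub_ne_zero.2 hab.ne') (ne_of_mem_of_not_mem hx h0))
      (subset_closure (hC x hx _ (sub_pos.2 hab))) ?_
    convert subset_closure hsum using 1
    module

end IsCone

lemma gaugeM_le {x y : Fin n → ℝ} {t : ℝ} (ht : 0 < t) (hmem : t • x - y ∈ closure C) :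
    gaugeM C x y ≤ t :=
  csInf_le ⟨0, fun _ hs => hs.1.le⟩ ⟨ht, hmem⟩

lemma gaugeM_nonneg (x y : Fin n → ℝ) : 0 ≤ gaugeM C x y :=
  Real.sInf_nonneg fun _ h => h.1.le

lemma gaugeM_spec (hC : IsCone C) (hO : IsOpen C) (hsal : IsSalientClosure C)
    {x y : Fin n → ℝ} (hx : x ∈ C) (hy : y ∈ C) (hy0 : y ≠ 0) :
    0 < gaugeM C x y ∧ gaugeM C x y • x - y ∈ closure C := by
  set T : Set ℝ := Ici 0 ∩ (fun t : ℝ => t • x - y) ⁻¹' closure C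
  have hT_bdd : BddBelow T := ⟨0, fun _ ht => ht.1⟩
  have hinf : sInf T ∈ T := by
    refine (isClosed_Ici.inter (isClosed_closure.preimage (by fun_prop))).csInf_mem ?_ hT_bdd
    obtain ⟨t, ht, hmem⟩ := hC.exists_smul_sub_mem hO hx y
    exact ⟨t, mem_Ici.2 ht.le, subset_closure hmem⟩
  have hpos : 0 < sInf T := by
    refine lt_of_le_of_ne hinf.1 fun h => hsal y hy0 (subset_closure hy) ?_
    simpa [← h] using hinf.2
  have hT : {t : ℝ | 0 < t ∧ t • x - y ∈ closure C} = T := by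
    ext t
    exact ⟨fun h => ⟨mem_Ici.2 h.1.le, h.2⟩, fun h => ⟨hpos.trans_le (csInf_le hT_bdd h), h.2⟩⟩
  rw [gaugeM, hT]
  exact ⟨hpos, hinf.2⟩

lemma smul_sub_mem_of_gaugeM_lt (hC : IsCone C) (hO : IsOpen C) (hconv : Convex ℝ C)
    (hsal : IsSalientClosure C) {x y : Fin n → ℝ} (hx : x ∈ C) (hy : y ∈ C) (hy0 : y ≠ 0)
    {t : ℝ} (ht : gaugeM C x y < t) : t • x - y ∈ C := by
  obtain ⟨-, hmem⟩ := gaugeM_spec hC hO hsal hx hy hy0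
  convert hC.add_mem_of_mem_closure hO hconv hmem (hC x hx _ (sub_pos.2 ht)) using 1
  module

lemma coneDist_zero_zero (h0 : (0 : Fin n → ℝ) ∈ closure C) : coneDist C 0 0 = 0 := by
  have hgauge : gaugeM C 0 0 = 0 := by
    rw [gaugeM]
    simp only [smul_zero, sub_zero, h0, and_true]
    exact csInf_Ioi
  simp [coneDist, hgauge]

section Birkhoff

variable {E m m' : ℝ}

lemma mul_sub_one_le_birkhoff (hE : 1 ≤ E) (hm : 0 < m) (hm' : 0 < m') (hmm' : m * m' ≤ E ^ 2)
    {u : ℝ} (hu : 0 < u) :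
    u * (m * m' - 1) ≤ (E - 1) / (E + 1) * ((m * u + 1) * (m' + u)) := by
  set r := √(m * m')
  have hr0 : 0 ≤ r := Real.sqrt_nonneg _
  have hr2 : r ^ 2 = m * m' := Real.sq_sqrt (by positivity)
  have hrE : r ≤ E := Real.sqrt_le_iff.2 ⟨by linarith, hmm'⟩
  -- AM-GM in the form `m (m u² + m' - 2 u r) = (m u - r)² ≥ 0`
  have hAM : u * (r + 1) ^ 2 ≤ (m * u + 1) * (m' + u) := by
    have h : m * (2 * u * r) ≤ m * (m * u ^ 2 + m') := by nlinarith [sq_nonneg (m * u - r)]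
    nlinarith [le_of_mul_le_mul_left h hm]
  rw [div_mul_eq_mul_div, le_div_iff₀ (by linarith)]
  calc u * (m * m' - 1) * (E + 1) = u * (r + 1) * ((r - 1) * (E + 1)) := by rw [← hr2]; ring
    _ ≤ u * (r + 1) * ((E - 1) * (r + 1)) :=
        mul_le_mul_of_nonneg_left (by nlinarith) (by positivity)
    _ = (E - 1) * (u * (r + 1) ^ 2) := by ring
    _ ≤ (E - 1) * ((m * u + 1) * (m' + u)) := mul_le_mul_of_nonneg_left hAM (by linarith)

lemma birkhoff_monotoneOn (hE : 1 ≤ E) (hm : 0 < m) (hm' : 0 < m') (hmm' : m * m' ≤ E ^ 2) :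
    MonotoneOn (fun u => (E - 1) / (E + 1) * Real.log u - Real.log (m * u + 1)
      + Real.log (m' + u)) (Ioi 0) := by
  set δ := (E - 1) / (E + 1)
  have hderiv : ∀ u ∈ Ioi (0 : ℝ), HasDerivAt (fun u => δ * Real.log u - Real.log (m * u + 1)
      + Real.log (m' + u)) (δ * u⁻¹ - m / (m * u + 1) + 1 / (m' + u)) u := fun u hu => by
    have hu : 0 < u := hu
    have h1 : HasDerivAt (fun u => Real.log (m * u + 1)) (m / (m * u + 1)) u := by
      simpa using (((hasDerivAt_id u).const_mul m).add_const 1).log (by positivity)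
    have h2 : HasDerivAt (fun u => Real.log (m' + u)) (1 / (m' + u)) u := by
      simpa using ((hasDerivAt_id u).const_add m').log (by positivity)
    exact (((Real.hasDerivAt_log hu.ne').const_mul δ).sub h1).add h2
  refine monotoneOn_of_hasDerivWithinAt_nonneg (convex_Ioi 0)
    (fun u hu => (hderiv u hu).continuousAt.continuousWithinAt)
    (fun u hu => (hderiv u (interior_subset hu)).hasDerivWithinAt) fun u hu => ?_
  have hu : 0 < u := interior_subset hu
  have hkey := mul_sub_one_le_birkhoff hE hm hm' hmm' hu
  have hsplit : δ * u⁻¹ - m / (m * u + 1) + 1 / (m' + u)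
      = (δ * ((m * u + 1) * (m' + u)) - u * (m * m' - 1))
        / (u * ((m * u + 1) * (m' + u))) := by
    field_simp
    ring
  rw [hsplit]
  exact div_nonneg (by linarith) (by positivity)

lemma log_cross_ratio_le (hE : 1 ≤ E) (hm : 0 < m) (hm' : 0 < m') (hmm' : m * m' ≤ E ^ 2)
    {s : ℝ} (hs : 1 ≤ s) :
    Real.log ((m * s + 1) * (m' + 1) / ((m + 1) * (m' + s)))
      ≤ (E - 1) / (E + 1) * Real.log s := by
  have h := birkhoff_monotoneOn hE hm hm' hmm' (mem_Ioi.2 one_pos)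
    (mem_Ioi.2 (one_pos.trans_le hs)) hs
  simp only [Real.log_one, mul_zero, mul_one, zero_sub] at h
  rw [Real.log_div (by positivity) (by positivity), Real.log_mul (by positivity) (by positivity),
    Real.log_mul (by positivity) (by positivity)]
  linarith

end Birkhoff

lemma tanh_div_four_eq (Δ : ℝ) :
    Real.tanh (Δ / 4) = (Real.exp (Δ / 2) - 1) / (Real.exp (Δ / 2) + 1) := by
  have hsq : Real.exp (Δ / 2) = Real.exp (Δ / 4) ^ 2 := by rw [← Real.exp_nat_mul]; ring_nf
  rw [Real.tanh_eq, Real.exp_neg, hsq]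
  field_simp

theorem coneDist_le_tanh_mul_log (hC : IsCone C) (hO : IsOpen C) (hconv : Convex ℝ C)
    (hsal : IsSalientClosure C) (h0 : (0 : Fin n → ℝ) ∉ C) {Δ : ℝ} (hΔ : 0 ≤ Δ)
    {x y : Fin n → ℝ} (hx : x ∈ C) (hy : y ∈ C) {a b : ℝ} (ha : 0 < a) (hb : 0 < b)
    (hp : y - a • x ∈ C) (hq : b • x - y ∈ C) (hpq : coneDist C (y - a • x) (b • x - y) ≤ Δ) :
    coneDist C x y ≤ Real.tanh (Δ / 4) * Real.log (b / a) := by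
  set E := Real.exp (Δ / 2)
  obtain ⟨hm, hm_mem⟩ := gaugeM_spec hC hO hsal hq hp (ne_of_mem_of_not_mem hp h0)
  obtain ⟨hm', hm'_mem⟩ := gaugeM_spec hC hO hsal hp hq (ne_of_mem_of_not_mem hq h0)
  set m := gaugeM C (b • x - y) (y - a • x)
  set m' := gaugeM C (y - a • x) (b • x - y)
  have hmm' : m * m' ≤ E ^ 2 := by
    rw [← Real.exp_nat_mul, ← Real.exp_log (by positivity : 0 < m * m'), Real.exp_le_exp,
      mul_comm m]
    exact hpq.trans_eq (by ring)
  -- `m q - p` and `m' p - q` are the combinations `(m b + a) x - (m + 1) y` and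
  -- `(m' + 1) y - (m' a + b) x`
  have hxy : gaugeM C x y ≤ (m * b + a) / (m + 1) := by
    refine gaugeM_le (by positivity) ?_
    convert hC.smul_mem_closure hm_mem (inv_pos.2 (by positivity : 0 < m + 1)) using 1
    match_scalars <;> field_simp <;> ring
  have hyx : gaugeM C y x ≤ (m' + 1) / (m' * a + b) := by
    refine gaugeM_le (by positivity) ?_
    convert hC.smul_mem_closure hm'_mem (inv_pos.2 (by positivity : 0 < m' * a + b)) using 1
    match_scalars <;> field_simp <;> ring
  have hx0 := ne_of_mem_of_not_mem hx h0
  have hy0 := ne_of_mem_of_not_mem hy h0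
  have hs : 1 ≤ b / a :=
    (one_le_div ha).2 (hC.lt_of_sub_mem_of_sub_mem hO hconv hsal h0 hx hp hq).le
  calc coneDist C x y
      ≤ Real.log ((m * (b / a) + 1) * (m' + 1) / ((m + 1) * (m' + b / a))) := by
        refine Real.log_le_log (mul_pos (gaugeM_spec hC hO hsal hx hy hy0).1
          (gaugeM_spec hC hO hsal hy hx hx0).1) ?_
        calc gaugeM C x y * gaugeM C y x ≤ (m * b + a) / (m + 1) * ((m' + 1) / (m' * a + b)) :=
              mul_le_mul hxy hyx (gaugeM_spec hC hO hsal hy hx hx0).1.le (by positivity)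
          _ = _ := by field_simp
    _ ≤ Real.tanh (Δ / 4) * Real.log (b / a) := by
        rw [tanh_div_four_eq]
        exact log_cross_ratio_le (Real.one_le_exp (by positivity)) hm hm' hmm' hs

theorem coneDist_le_tanh_mul_log_gaugeM_add (hC : IsCone C) (hO : IsOpen C)
    (hconv : Convex ℝ C) (hsal : IsSalientClosure C) (h0 : (0 : Fin n → ℝ) ∉ C)
    {C' : Set (Fin n → ℝ)} (hC' : IsCone C') (hO' : IsOpen C') (hconv' : Convex ℝ C')
    (hsub : C' ⊆ C) {Δ : ℝ} (hΔ : 0 ≤ Δ) (hdiam : ∀ p ∈ C', ∀ q ∈ C', coneDist C p q ≤ Δ)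
    {x y : Fin n → ℝ} (hx : x ∈ C') (hy : y ∈ C') {ε : ℝ} (hε : 0 < ε) :
    coneDist C x y
      ≤ Real.tanh (Δ / 4) * Real.log ((gaugeM C' x y + ε) * (gaugeM C' y x + ε)) := by
  have hsal' := hsal.subset hsub
  have hx0 : x ≠ 0 := ne_of_mem_of_not_mem (hsub hx) h0
  have hy0 : y ≠ 0 := ne_of_mem_of_not_mem (hsub hy) h0
  have hβ := gaugeM_nonneg (C := C') x y
  have hγ := gaugeM_nonneg (C := C') y x
  have hq := smul_sub_mem_of_gaugeM_lt hC' hO' hconv' hsal' hx hy hy0 (lt_add_of_pos_right _ hε)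
  have hp : y - (gaugeM C' y x + ε)⁻¹ • x ∈ C' := by
    convert hC' _ (smul_sub_mem_of_gaugeM_lt hC' hO' hconv' hsal' hy hx hx0
      (lt_add_of_pos_right _ hε)) (gaugeM C' y x + ε)⁻¹ (by positivity) using 1
    rw [smul_sub, smul_smul, inv_mul_cancel₀ (by positivity), one_smul]
  simpa [div_inv_eq_mul] using coneDist_le_tanh_mul_log hC hO hconv hsal h0 hΔ
    (hsub hx) (hsub hy) (inv_pos.2 (by positivity)) (by positivity) (hsub hp) (hsub hq)
    (hdiam _ hp _ hq)

lemma le_mul_log_mul_of_forall_pos {d c β γ : ℝ} (hβγ : β * γ ≠ 0)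
    (h : ∀ ε > 0, d ≤ c * Real.log ((β + ε) * (γ + ε))) : d ≤ c * Real.log (β * γ) := by
  have hcont : ContinuousWithinAt (fun ε => c * Real.log ((β + ε) * (γ + ε))) (Ioi 0) 0 :=
    ((Real.continuousAt_log (by simpa using hβγ)).comp
      (f := fun ε => (β + ε) * (γ + ε)) (by fun_prop)).const_mul _ |>.continuousWithinAt
  simpa using ContinuousWithinAt.closure_le (by simp) continuousWithinAt_const hcont h

/-- If an open subcone `C' ⊆ C` has diameter at most `Mb` for the Hilbert metric of `C`,
then the inclusion `C' ↪ C` is a uniform `δ(Mb)`-contraction of the Hilbert metrics, with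
`δ(Mb) < 1` depending only on `Mb` (and the dimension). -/
theorem hilbert_metric_uniform_contraction (n : ℕ) (Mb : ℝ) :
    ∃ δ : ℝ, δ < 1 ∧
      ∀ C C' : Set (Fin n → ℝ),
        IsOpen C → Convex ℝ C → IsCone C → C.Nonempty →
        (∀ x : Fin n → ℝ, x ≠ 0 → x ∈ closure C → -x ∈ closure C → False) →
        IsOpen C' → Convex ℝ C' → IsCone C' → C' ⊆ C →
        (∀ x ∈ C', ∀ y ∈ C', coneDist C x y ≤ Mb) →
        ∀ x ∈ C', ∀ y ∈ C', coneDist C x y ≤ δ * coneDist C' x y := by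
  refine ⟨Real.tanh (max Mb 0 / 4), Real.tanh_lt_one _, ?_⟩
  intro C C' hO hconv hC _ hsal hO' hconv' hC' hsub hdiam x hx y hy
  by_cases h0 : (0 : Fin n → ℝ) ∈ C
  · obtain rfl := hC.eq_zero_of_zero_mem hO hsal h0 x
    obtain rfl := hC.eq_zero_of_zero_mem hO hsal h0 y
    simp [coneDist_zero_zero (subset_closure h0), coneDist_zero_zero (subset_closure hx)]
  have hsal' := IsSalientClosure.subset hsal hsub
  have hβ := gaugeM_spec hC' hO' hsal' hx hy (ne_of_mem_of_not_mem (hsub hy) h0)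
  have hγ := gaugeM_spec hC' hO' hsal' hy hx (ne_of_mem_of_not_mem (hsub hx) h0)
  exact le_mul_log_mul_of_forall_pos (mul_pos hβ.1 hγ.1).ne' fun ε hε =>
    coneDist_le_tanh_mul_log_gaugeM_add hC hO hconv hsal h0 hC' hO' hconv' hsub
      (le_max_right _ _) (fun p hp q hq => (hdiam p hp q hq).trans (le_max_left _ _)) hx hy hε
end
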